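/- arXiv:1005.3346 — 2 statements merged into one kernel-verified Lean document; each statement's English description precedes it below -/
import Mathlib

section
/- With G as in the presentation above and p = 1, G is the trivial group for every integer n ≥ 1. -/
/-- With `G` the group of the presentation of Lemma 4.1 and `p = 1`,
`G` is the trivial group for every integer `n ≥ 1`. -/
theorem stmt_7 {G : Type*} [Group G] (n : ℕ) (hn : 1 ≤ n)
    (a1 b1 a2 b2 c1 d1 c2 d2 : G)
    (hgen : Subgroup.closure {a1, b1, a2, b2, c1, d1, c2, d2} = (⊤ : Subgroup G))
    (r1 : a2 = c2⁻¹ * a1 * c2)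
    (r2 : b2 = c2⁻¹ * b1 * c2)
    (r3 : b1 = c2⁻¹ * b2 * c2)
    (r4 : b2 * d2 * b2⁻¹ * d2⁻¹ = 1)
    (r5 : (a1⁻¹ * b1⁻¹ * a2) * d2 * (a1⁻¹ * b1⁻¹ * a2)⁻¹ * d2⁻¹ = 1)
    (r6 : (a2⁻¹ * b2⁻¹ * a1) * d2 * (a2⁻¹ * b2⁻¹ * a1)⁻¹ * d2⁻¹ = 1)
    (r7 : (b1⁻¹ * d1⁻¹ * (b1⁻¹)⁻¹ * (d1⁻¹)⁻¹) ^ n = a1)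
    (r8 : a1⁻¹ * d1 * (a1⁻¹)⁻¹ * d1⁻¹ = b1)
    (r9 : b2⁻¹ * d1⁻¹ * (b2⁻¹)⁻¹ * (d1⁻¹)⁻¹ = c1)
    (r10 : b2 * c1⁻¹ * b2⁻¹ * (c1⁻¹)⁻¹ = d1)
    (r11 : c2⁻¹ * a1 * a2 * c2 * a1⁻¹ * a2⁻¹ = d2)
    (r12 : a1 * (c2 * d2⁻¹ * c2⁻¹) * a1⁻¹ * (c2 * d2⁻¹ * c2⁻¹)⁻¹ = c2 * b2)
    (r13 : a1 * c1 * a1⁻¹ * c1⁻¹ = 1)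
    (r14 : b1 * c1 * b1⁻¹ * c1⁻¹ = 1)
    (r15 : a2 * c1 * a2⁻¹ * c1⁻¹ = 1)
    (r16 : a2 * d1 * a2⁻¹ * d1⁻¹ = 1)
    (r17 : b1 * d2 * b1⁻¹ * d2⁻¹ = 1)
    (r18 : (a1 * b1 * a1⁻¹ * b1⁻¹) * (a2 * b2 * a2⁻¹ * b2⁻¹) = 1)
    (r19 : (c1 * d1 * c1⁻¹ * d1⁻¹) * (c2 * d2 * c2⁻¹ * d2⁻¹) = 1) :
    ∀ g : G, g = 1 := by
  -- commuting forms of r4, r17, r14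
  have hbd : d2 * b2 = b2 * d2 := by
    calc d2 * b2 = (b2 * d2 * b2⁻¹ * d2⁻¹)⁻¹ * (b2 * d2) := by group
      _ = (1 : G)⁻¹ * (b2 * d2) := by rw [r4]
      _ = b2 * d2 := by group
  have hbd1 : d2 * b1 = b1 * d2 := by
    calc d2 * b1 = (b1 * d2 * b1⁻¹ * d2⁻¹)⁻¹ * (b1 * d2) := by group
      _ = (1 : G)⁻¹ * (b1 * d2) := by rw [r17]
      _ = b1 * d2 := by group
  have hc1b1 : b1 * c1 = c1 * b1 := by
    calc b1 * c1 = (b1 * c1 * b1⁻¹ * c1⁻¹) * (c1 * b1) := by group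
      _ = (1 : G) * (c1 * b1) := by rw [r14]
      _ = c1 * b1 := by group
  -- swap relations
  have h1 : c2 * b2 = b1 * c2 := by rw [r2]; group
  have h2 : c2 * b1 = b2 * c2 := by rw [r3]; group
  have hs1 : b1⁻¹ * c2 = c2 * b2⁻¹ := by
    calc b1⁻¹ * c2 = b1⁻¹ * (c2 * b2) * b2⁻¹ := by group
      _ = b1⁻¹ * (b1 * c2) * b2⁻¹ := by rw [h1]
      _ = c2 * b2⁻¹ := by group
  have hs2 : c2 * b1⁻¹ = b2⁻¹ * c2 := by
    calc c2 * b1⁻¹ = b2⁻¹ * (b2 * c2) * b1⁻¹ := by group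
      _ = b2⁻¹ * (c2 * b1) * b1⁻¹ := by rw [← h2]
      _ = b2⁻¹ * c2 := by group
  -- F3 : conjugate of r12 by c2
  have hF3 : a2 * d2⁻¹ * a2⁻¹ * d2 = b2 * c2 := by
    calc a2 * d2⁻¹ * a2⁻¹ * d2
        = c2⁻¹ * (a1 * (c2 * d2⁻¹ * c2⁻¹) * a1⁻¹ * (c2 * d2⁻¹ * c2⁻¹)⁻¹) * c2 := by
          rw [r1]; group
      _ = c2⁻¹ * (c2 * b2) * c2 := by rw [r12]
      _ = b2 * c2 := by group
  -- consequences of r6 and r5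
  have h4a : a2 * d2⁻¹ * a2⁻¹ = b2⁻¹ * (a1 * d2⁻¹ * a1⁻¹) * b2 := by
    calc a2 * d2⁻¹ * a2⁻¹
        = (b2⁻¹ * (a1 * d2⁻¹ * a1⁻¹) * b2) *
            (a2 * ((a2⁻¹ * b2⁻¹ * a1) * d2 * (a2⁻¹ * b2⁻¹ * a1)⁻¹ * d2⁻¹) * a2⁻¹) := by group
      _ = (b2⁻¹ * (a1 * d2⁻¹ * a1⁻¹) * b2) * (a2 * (1 : G) * a2⁻¹) := by rw [r6]
      _ = b2⁻¹ * (a1 * d2⁻¹ * a1⁻¹) * b2 := by group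
  have h5a : a2 * d2⁻¹ * a2⁻¹ = b1 * (a1 * d2⁻¹ * a1⁻¹) * b1⁻¹ := by
    calc a2 * d2⁻¹ * a2⁻¹
        = (b1 * a1 * d2⁻¹) * ((a1⁻¹ * b1⁻¹ * a2) * d2 * (a1⁻¹ * b1⁻¹ * a2)⁻¹ * d2⁻¹)⁻¹ *
            (d2 * a1⁻¹ * b1⁻¹) * (b1 * (a1 * d2⁻¹ * a1⁻¹) * b1⁻¹) := by group
      _ = (b1 * a1 * d2⁻¹) * (1 : G)⁻¹ * (d2 * a1⁻¹ * b1⁻¹) *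
            (b1 * (a1 * d2⁻¹ * a1⁻¹) * b1⁻¹) := by rw [r5]
      _ = b1 * (a1 * d2⁻¹ * a1⁻¹) * b1⁻¹ := by group
  -- F5
  have D8a : b2⁻¹ * (a1 * d2⁻¹ * a1⁻¹) * b2 * d2 = b2 * c2 := by
    calc b2⁻¹ * (a1 * d2⁻¹ * a1⁻¹) * b2 * d2
        = (b2⁻¹ * (a1 * d2⁻¹ * a1⁻¹) * b2) * d2 := by group
      _ = (a2 * d2⁻¹ * a2⁻¹) * d2 := by rw [← h4a]
      _ = a2 * d2⁻¹ * a2⁻¹ * d2 := by group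
      _ = b2 * c2 := hF3
  have hF5 : a1 * d2⁻¹ * a1⁻¹ * d2 = b2 * b2 * c2 * b2⁻¹ := by
    calc a1 * d2⁻¹ * a1⁻¹ * d2
        = b2 * (b2⁻¹ * (a1 * d2⁻¹ * a1⁻¹) * b2 * d2) * d2⁻¹ * b2⁻¹ * d2 := by group
      _ = b2 * (b2 * c2) * d2⁻¹ * b2⁻¹ * d2 := by rw [D8a]
      _ = b2 * b2 * c2 * (b2 * d2)⁻¹ * d2 := by group
      _ = b2 * b2 * c2 * (d2 * b2)⁻¹ * d2 := by rw [← hbd]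
      _ = b2 * b2 * c2 * b2⁻¹ := by group
  -- F6 : b1 commutes with b2^2
  have D9a : b1 * (a1 * d2⁻¹ * a1⁻¹) * b1⁻¹ * d2 = b2 * c2 := by
    calc b1 * (a1 * d2⁻¹ * a1⁻¹) * b1⁻¹ * d2
        = (b1 * (a1 * d2⁻¹ * a1⁻¹) * b1⁻¹) * d2 := by group
      _ = (a2 * d2⁻¹ * a2⁻¹) * d2 := by rw [← h5a]
      _ = a2 * d2⁻¹ * a2⁻¹ * d2 := by group
      _ = b2 * c2 := hF3
  have hY : b2 * c2 = b1 * b2 * b2 * b1⁻¹ * (b2⁻¹ * c2) := by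
    calc b2 * c2
        = b1 * (a1 * d2⁻¹ * a1⁻¹) * b1⁻¹ * d2 := D9a.symm
      _ = b1 * (a1 * d2⁻¹ * a1⁻¹) * b1⁻¹ * ((d2 * b1) * b1⁻¹) := by group
      _ = b1 * (a1 * d2⁻¹ * a1⁻¹) * b1⁻¹ * ((b1 * d2) * b1⁻¹) := by rw [hbd1]
      _ = b1 * (a1 * d2⁻¹ * a1⁻¹ * d2) * b1⁻¹ := by group
      _ = b1 * (b2 * b2 * c2 * b2⁻¹) * b1⁻¹ := by rw [hF5]
      _ = b1 * b2 * b2 * (c2 * b2⁻¹) * b1⁻¹ := by group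
      _ = b1 * b2 * b2 * (b1⁻¹ * c2) * b1⁻¹ := by rw [← hs1]
      _ = b1 * b2 * b2 * b1⁻¹ * (c2 * b1⁻¹) := by group
      _ = b1 * b2 * b2 * b1⁻¹ * (b2⁻¹ * c2) := by rw [hs2]
  have hF6 : b1 * (b2 * b2) = b2 * b2 * b1 := by
    calc b1 * (b2 * b2)
        = (b1 * b2 * b2 * b1⁻¹ * (b2⁻¹ * c2)) * c2⁻¹ * b2 * b1 := by group
      _ = (b2 * c2) * c2⁻¹ * b2 * b1 := by rw [← hY]
      _ = b2 * b2 * b1 := by group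
  have hF6' : b1 * (b2⁻¹ * b2⁻¹) = (b2⁻¹ * b2⁻¹) * b1 := by
    calc b1 * (b2⁻¹ * b2⁻¹)
        = (b2⁻¹ * b2⁻¹) * (b2 * b2 * b1) * (b2⁻¹ * b2⁻¹) := by group
      _ = (b2⁻¹ * b2⁻¹) * (b1 * (b2 * b2)) * (b2⁻¹ * b2⁻¹) := by rw [← hF6]
      _ = (b2⁻¹ * b2⁻¹) * b1 := by group
  -- the b2-action on the pair (c1, d1)
  have bc1 : b2 * c1 * b2⁻¹ = c1 * d1⁻¹ := by
    calc b2 * c1 * b2⁻¹ = c1 * (b2 * c1⁻¹ * b2⁻¹ * (c1⁻¹)⁻¹)⁻¹ := by group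
      _ = c1 * d1⁻¹ := by rw [r10]
  have bd1 : b2⁻¹ * d1 * b2 = d1 * c1⁻¹ := by
    calc b2⁻¹ * d1 * b2 = d1 * (b2⁻¹ * d1⁻¹ * (b2⁻¹)⁻¹ * (d1⁻¹)⁻¹)⁻¹ := by group
      _ = d1 * c1⁻¹ := by rw [r9]
  have hd : b2 * d1 * b2⁻¹ = d1 * c1 * d1⁻¹ := by
    calc b2 * d1 * b2⁻¹
        = b2 * ((d1 * c1⁻¹) * c1) * b2⁻¹ := by group
      _ = b2 * ((b2⁻¹ * d1 * b2) * c1) * b2⁻¹ := by rw [← bd1]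
      _ = d1 * (b2 * c1 * b2⁻¹) := by group
      _ = d1 * (c1 * d1⁻¹) := by rw [bc1]
      _ = d1 * c1 * d1⁻¹ := by group
  have hpsi2 : b2 * (b2 * c1 * b2⁻¹) * b2⁻¹ = d1⁻¹ := by
    calc b2 * (b2 * c1 * b2⁻¹) * b2⁻¹
        = b2 * (c1 * d1⁻¹) * b2⁻¹ := by rw [bc1]
      _ = (b2 * c1 * b2⁻¹) * (b2 * d1 * b2⁻¹)⁻¹ := by group
      _ = (c1 * d1⁻¹) * (b2 * d1 * b2⁻¹)⁻¹ := by rw [bc1]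
      _ = (c1 * d1⁻¹) * (d1 * c1 * d1⁻¹)⁻¹ := by rw [hd]
      _ = d1⁻¹ := by group
  -- the key commutation [b1, d1] = 1
  have hbd1' : b1 * d1⁻¹ = d1⁻¹ * b1 := by
    calc b1 * d1⁻¹
        = b1 * (b2 * (b2 * c1 * b2⁻¹) * b2⁻¹) := by rw [hpsi2]
      _ = (b1 * (b2 * b2)) * c1 * b2⁻¹ * b2⁻¹ := by group
      _ = (b2 * b2 * b1) * c1 * b2⁻¹ * b2⁻¹ := by rw [hF6]
      _ = b2 * b2 * (b1 * c1) * b2⁻¹ * b2⁻¹ := by group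
      _ = b2 * b2 * (c1 * b1) * b2⁻¹ * b2⁻¹ := by rw [hc1b1]
      _ = b2 * b2 * c1 * (b1 * (b2⁻¹ * b2⁻¹)) := by group
      _ = b2 * b2 * c1 * ((b2⁻¹ * b2⁻¹) * b1) := by rw [hF6']
      _ = (b2 * (b2 * c1 * b2⁻¹) * b2⁻¹) * b1 := by group
      _ = d1⁻¹ * b1 := by rw [hpsi2]
  have hb1d1 : b1 * d1 = d1 * b1 := by
    calc b1 * d1 = d1 * (d1⁻¹ * b1) * d1 := by group
      _ = d1 * (b1 * d1⁻¹) * d1 := by rw [← hbd1']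
      _ = d1 * b1 := by group
  -- kill everything
  have hW : b1⁻¹ * d1⁻¹ * (b1⁻¹)⁻¹ * (d1⁻¹)⁻¹ = 1 := by
    calc b1⁻¹ * d1⁻¹ * (b1⁻¹)⁻¹ * (d1⁻¹)⁻¹ = b1⁻¹ * d1⁻¹ * (b1 * d1) := by group
      _ = b1⁻¹ * d1⁻¹ * (d1 * b1) := by rw [hb1d1]
      _ = 1 := by group
  have ha1 : a1 = 1 := by rw [← r7, hW, one_pow]
  have hb1 : b1 = 1 := by rw [← r8, ha1]; group
  have ha2 : a2 = 1 := by rw [r1, ha1]; group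
  have hb2 : b2 = 1 := by rw [r2, hb1]; group
  have hc1 : c1 = 1 := by rw [← r9, hb2]; group
  have hd1 : d1 = 1 := by rw [← r10, hc1]; group
  have hd2 : d2 = 1 := by rw [← r11, ha1, ha2]; group
  have hc2 : c2 = 1 := by
    have h := r12
    rw [ha1, hb2] at h
    have h' : (1 : G) = c2 * 1 := by rw [← h]; group
    calc c2 = c2 * 1 := by group
      _ = 1 := h'.symm
  -- conclude
  intro g
  have hle : Subgroup.closure {a1, b1, a2, b2, c1, d1, c2, d2} ≤ (⊥ : Subgroup G) := by
    apply (Subgroup.closure_le _).mpr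
    intro x hx
    simp only [Set.mem_insert_iff, Set.mem_singleton_iff] at hx
    have hx1 : x = 1 := by
      rcases hx with h | h | h | h | h | h | h | h <;> subst h <;>
        first
          | exact ha1 | exact hb1 | exact ha2 | exact hb2
          | exact hc1 | exact hd1 | exact hc2 | exact hd2
    rw [SetLike.mem_coe, Subgroup.mem_bot]
    exact hx1
  rw [hgen] at hle
  exact Subgroup.mem_bot.mp (hle (Subgroup.mem_top g))
end

section
/- If M is a closed smooth oriented simply connected spin 4-manifold that decomposes as a connected sum M = X # Y, and the Seiberg–Witten invariant vanishes for any connected sum of 4-manifolds both having b2^+ > 0, and every simply connected closed 4-manifold with nontrivial negative definite intersection form has odd intersection form (Donaldson), then nontriviality of the Seiberg–Witten invariant of M implies one of X, Y has b2 = 0 and hence (by Freedman) is homeomorphic to S^4. -/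
/-- Axiomatized irreducibility criterion (Lemma 1.1 of the paper).  Let `M` be a
closed smooth oriented simply connected spin 4-manifold decomposing as a connected
sum `M = X # Y`.  Assume: the summands of a simply connected spin manifold are
simply connected with even intersection forms; (1) the Seiberg–Witten invariant
vanishes for connected sums where both summands have `b₂⁺ > 0`; a summand with
`b₂⁺ = 0` and `b₂ > 0` is negative definite; (2) Donaldson: a simply connected
closed 4-manifold with nontrivial negative definite intersection form has odd
(non-even) intersection form; (4) Freedman: a simply connected closed 4-manifold
with `b₂ = 0` is homeomorphic to `S⁴`.  Then nontriviality of the Seiberg–Witten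
invariant of `M` implies one of `X`, `Y` is homeomorphic to `S⁴`, i.e. `M` is
irreducible. -/
theorem stmt_19
    (Man : Type*) (ConnSum : Man → Man → Man → Prop)
    (SimplyConnected Spin SWNontrivial HomeoS4 NegDefinite EvenForm : Man → Prop)
    (b2plus b2 : Man → ℕ)
    (M X Y : Man)
    (hsum : ConnSum M X Y)
    (hsc : SimplyConnected M) (hspin : Spin M) (hSW : SWNontrivial M)
    (hsummand : ∀ A B C, ConnSum A B C → SimplyConnected A → Spin A →
      SimplyConnected B ∧ SimplyConnected C ∧ EvenForm B ∧ EvenForm C)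
    (hvanish : ∀ A B C, ConnSum A B C → 0 < b2plus B → 0 < b2plus C →
      ¬ SWNontrivial A)
    (hnegdef : ∀ A, b2plus A = 0 → 0 < b2 A → NegDefinite A)
    (hdonaldson : ∀ A, SimplyConnected A → NegDefinite A → ¬ EvenForm A)
    (hfreedman : ∀ A, SimplyConnected A → b2 A = 0 → HomeoS4 A) :
    HomeoS4 X ∨ HomeoS4 Y := by
  obtain ⟨hscX, hscY, hevX, hevY⟩ := hsummand M X Y hsum hsc hspin
  have key : ∀ A, SimplyConnected A → EvenForm A → b2plus A = 0 → HomeoS4 A := by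
    intro A hA hev hA0
    apply hfreedman A hA
    by_contra h
    exact hdonaldson A hA (hnegdef A hA0 (Nat.pos_of_ne_zero h)) hev
  rcases Nat.eq_zero_or_pos (b2plus X) with hX | hX
  · exact Or.inl (key X hscX hevX hX)
  rcases Nat.eq_zero_or_pos (b2plus Y) with hY | hY
  · exact Or.inr (key Y hscY hevY hY)
  exact absurd hSW (hvanish M X Y hsum hX hY)
end
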